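/- arXiv:2210.12788 — 2 statements merged into one kernel-verified Lean document; each statement's English description precedes it below -/
import Mathlib

section
/- Let θ be a stable state of the homogeneous Kuramoto model on an (n,d,α)-expander graph G, taking values in (−π, π], and suppose ρ₁(θ) is real and non-negative. Then nα² ≥ ρ₁(θ)² · Σ_{x∈V} s(θ_x). -/
open Finset

noncomputable def opNorm {n : ℕ} (M : Matrix (Fin n) (Fin n) ℝ) : ℝ :=
  ‖LinearMap.toContinuousLinearMap (Matrix.toEuclideanLin M)‖

def onesMat (n : ℕ) : Matrix (Fin n) (Fin n) ℝ := Matrix.of fun _ _ => 1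

def IsAdjMatrix {n : ℕ} (A : Matrix (Fin n) (Fin n) ℝ) : Prop :=
  A.IsSymm ∧ (∀ x y, A x y = 0 ∨ A x y = 1) ∧ ∀ x, A x x = 0

def IsEquilibrium {n : ℕ} (A : Matrix (Fin n) (Fin n) ℝ) (θ : Fin n → ℝ) : Prop :=
  ∀ y, ∑ x, A x y * Real.sin (θ x - θ y) = 0

def IsStable {n : ℕ} (A : Matrix (Fin n) (Fin n) ℝ) (θ : Fin n → ℝ) : Prop :=
  IsEquilibrium A θ ∧
    ∀ f : Fin n → ℝ, 0 ≤ ∑ x, ∑ y, A x y * Real.cos (θ x - θ y) * (f x - f y) ^ 2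

def FullySync {n : ℕ} (θ : Fin n → ℝ) : Prop :=
  ∀ x y, ∃ k : ℤ, θ x - θ y = 2 * Real.pi * k

def IsExpander {n : ℕ} (A : Matrix (Fin n) (Fin n) ℝ) (d α : ℝ) : Prop :=
  opNorm (A - (d / n) • onesMat n) ≤ α * d

noncomputable def lapCentered {n : ℕ} (A : Matrix (Fin n) (Fin n) ℝ) (d : ℝ) :
    Matrix (Fin n) (Fin n) ℝ :=
  Matrix.diagonal (fun x => ∑ y, A x y) - A - d • (1 : Matrix (Fin n) (Fin n) ℝ)
    + (d / n) • onesMat n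

def IsExpander5 {n : ℕ} (A : Matrix (Fin n) (Fin n) ℝ) (d α cm cp : ℝ) : Prop :=
  IsExpander A d α ∧
    (lapCentered A d - (cm * d) • (1 : Matrix (Fin n) (Fin n) ℝ)).PosSemidef ∧
    ((cp * d) • (1 : Matrix (Fin n) (Fin n) ℝ) - lapCentered A d).PosSemidef

noncomputable def daido {n : ℕ} (k : ℕ) (θ : Fin n → ℝ) : ℂ :=
  (n : ℂ)⁻¹ * ∑ x, Complex.exp (Complex.I * k * θ x)

noncomputable def sFun (t : ℝ) : ℝ := if |t| ≤ Real.pi / 2 then Real.sin t ^ 2 else 1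

noncomputable def Cset {n : ℕ} (θ : Fin n → ℝ) (ψ : ℝ) : Finset (Fin n) :=
  Finset.univ.filter fun x => ψ ≤ |θ x|

def eXY {n : ℕ} (A : Matrix (Fin n) (Fin n) ℝ) (X Y : Finset (Fin n)) : ℝ :=
  ∑ x ∈ X, ∑ y ∈ Y, A x y

noncomputable def kerK (a b : ℝ) : ℝ := Real.sin (|a| - min |b| (Real.pi / 2))

def matGraph {n : ℕ} (A : Matrix (Fin n) (Fin n) ℝ) : SimpleGraph (Fin n) where
  Adj x y := x ≠ y ∧ A x y = 1 ∧ A y x = 1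
  symm := ⟨fun x y ⟨h1, h2, h3⟩ => ⟨h1.symm, h3, h2⟩⟩
  loopless := ⟨fun x ⟨h1, _⟩ => h1 rfl⟩

noncomputable def erMeasure (n : ℕ) (p : ℝ) (hp : p ≤ 1) :
    MeasureTheory.Measure ({e : Fin n × Fin n // e.1 < e.2} → Bool) :=
  MeasureTheory.Measure.pi fun _ =>
    (PMF.bernoulli (Real.toNNReal p) (Real.toNNReal_le_one.mpr hp)).toMeasure

def erAdj (n : ℕ) (ω : {e : Fin n × Fin n // e.1 < e.2} → Bool) :
    Matrix (Fin n) (Fin n) ℝ :=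
  Matrix.of fun x y =>
    if h : x < y then (if ω ⟨(x, y), h⟩ then 1 else 0)
    else if h : y < x then (if ω ⟨(y, x), h⟩ then 1 else 0) else 0

/-!
At an equilibrium the local field `∑ₓ A x y e^{iθₓ}` is a real multiple `r_y e^{iθ_y}` of the phase
at `y`, and stability tested on the indicator of `y` gives `r_y ≥ 0`. As `ρ₁ = ρ` is real and
nonnegative, removing the mean part `(d/n) J e^{iθ} = dρ` leaves `r_y e^{iθ_y} - dρ`, the field of
`A - (d/n) J`, whose modulus is at least the distance from `dρ` to the ray through `e^{iθ_y}`,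
i.e. `dρ √(s θ_y)`. Summing squares and using the expander bound on `A - (d/n) J` gives
`(dρ)² ∑ s(θ_y) ≤ (αd)² ‖e^{iθ}‖² = (αd)² n`.
-/

open Real
open scoped Matrix

lemma sum_sq_mulVec_le_of_opNorm_le {n : ℕ} {M : Matrix (Fin n) (Fin n) ℝ} {C : ℝ}
    (hM : opNorm M ≤ C) (v : Fin n → ℝ) :
    ∑ y, (M *ᵥ v) y ^ 2 ≤ C ^ 2 * ∑ x, v x ^ 2 := by
  have hle : ‖WithLp.toLp 2 (M *ᵥ v)‖ ≤ C * ‖WithLp.toLp 2 v‖ :=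
    ((LinearMap.toContinuousLinearMap (Matrix.toEuclideanLin M)).le_opNorm _).trans
      (mul_le_mul_of_nonneg_right hM (norm_nonneg _))
  have hsq := pow_le_pow_left₀ (norm_nonneg _) hle 2
  rwa [mul_pow, EuclideanSpace.real_norm_sq_eq, EuclideanSpace.real_norm_sq_eq] at hsq

lemma onesMat_isSymm (n : ℕ) : (onesMat n).IsSymm := Matrix.IsSymm.ext fun _ _ => rfl

lemma sum_sq_vecMul_cos_add_sin_le {n : ℕ} {M : Matrix (Fin n) (Fin n) ℝ} {C : ℝ}
    (hsymm : M.IsSymm) (hM : opNorm M ≤ C) (θ : Fin n → ℝ) :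
    ∑ y, (((cos ∘ θ) ᵥ* M) y ^ 2 + ((sin ∘ θ) ᵥ* M) y ^ 2) ≤ C ^ 2 * n := by
  simp only [← Matrix.mulVec_transpose, hsymm.eq, Finset.sum_add_distrib]
  calc _ ≤ C ^ 2 * ∑ x, cos (θ x) ^ 2 + C ^ 2 * ∑ x, sin (θ x) ^ 2 :=
        add_le_add (sum_sq_mulVec_le_of_opNorm_le hM _) (sum_sq_mulVec_le_of_opNorm_le hM _)
    _ = C ^ 2 * n := by simp [← mul_add, ← Finset.sum_add_distrib]

lemma sq_mul_sFun_le {t c r : ℝ} (ht : |t| ≤ π) (hc : 0 ≤ c) (hr : 0 ≤ r) :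
    c ^ 2 * sFun t ≤ (r * cos t - c) ^ 2 + (r * sin t) ^ 2 := by
  have hexpand : (r * cos t - c) ^ 2 + (r * sin t) ^ 2 = r ^ 2 - 2 * r * c * cos t + c ^ 2 := by
    linear_combination r ^ 2 * cos_sq_add_sin_sq t
  rw [hexpand, sFun]
  split_ifs with hπ2
  · nlinarith [sq_nonneg (r - c * cos t), sin_sq_add_cos_sq t]
  · have hcos : cos t ≤ 0 := by
      rw [← cos_abs]
      exact cos_nonpos_of_pi_div_two_le_of_le (by linarith) (by linarith)
    nlinarith [mul_nonneg (mul_nonneg hr hc) (neg_nonneg.2 hcos)]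

lemma natCast_mul_daido {n : ℕ} (k : ℕ) (θ : Fin n → ℝ) :
    (n : ℂ) * daido k θ = ∑ x, Complex.exp (Complex.I * k * θ x) := by
  rcases Nat.eq_zero_or_pos n with rfl | hn
  · simp
  · exact mul_inv_cancel_left₀ (by exact_mod_cast hn.ne') _

lemma sum_cos_eq_natCast_mul_daido_re {n : ℕ} (k : ℕ) (θ : Fin n → ℝ) :
    ∑ x, cos (k * θ x) = n * (daido k θ).re := by
  have h := congrArg Complex.re (natCast_mul_daido k θ)
  simp only [Complex.re_sum, Complex.mul_re, Complex.natCast_re, Complex.natCast_im, zero_mul,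
    sub_zero] at h
  rw [h]
  refine Finset.sum_congr rfl fun x _ => ?_
  rw [← Complex.exp_ofReal_mul_I_re]
  congr 2
  push_cast
  ring

lemma sum_sin_eq_natCast_mul_daido_im {n : ℕ} (k : ℕ) (θ : Fin n → ℝ) :
    ∑ x, sin (k * θ x) = n * (daido k θ).im := by
  have h := congrArg Complex.im (natCast_mul_daido k θ)
  simp only [Complex.im_sum, Complex.mul_im, Complex.natCast_re, Complex.natCast_im, zero_mul,
    add_zero] at h
  rw [h]
  refine Finset.sum_congr rfl fun x _ => ?_
  rw [← Complex.exp_ofReal_mul_I_im]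
  congr 2
  push_cast
  ring

lemma vecMul_sub_smul_onesMat_apply {n : ℕ} (A : Matrix (Fin n) (Fin n) ℝ) (c : ℝ)
    (v : Fin n → ℝ) (y : Fin n) :
    (v ᵥ* (A - c • onesMat n)) y = (v ᵥ* A) y - c * ∑ x, v x := by
  simp [Matrix.vecMul, dotProduct, onesMat, Finset.mul_sum, mul_sub, mul_comm]

lemma sum_sum_mul_sub_single_sq {ι : Type*} [Fintype ι] [DecidableEq ι] (t : ι → ι → ℝ)
    (y : ι) :
    ∑ x, ∑ z, t x z * ((Pi.single y 1 : ι → ℝ) x - (Pi.single y 1 : ι → ℝ) z) ^ 2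
      = ∑ z, t y z + ∑ x, t x y - 2 * t y y := by
  have hterm : ∀ x z, t x z * ((Pi.single y 1 : ι → ℝ) x - (Pi.single y 1 : ι → ℝ) z) ^ 2
      = (if x = y then t x z else 0) + (if z = y then t x z else 0)
        - (if x = y then (if z = y then 2 * t x z else 0) else 0) := by
    intro x z
    simp only [Pi.single_apply]
    split_ifs <;> ring
  simp only [hterm, Finset.sum_sub_distrib, Finset.sum_add_distrib, Finset.sum_ite_eq',
    Finset.mem_univ, if_true, Finset.sum_ite_irrel, Finset.sum_const_zero]

section Kuramoto

variable {n : ℕ} {A : Matrix (Fin n) (Fin n) ℝ} {θ : Fin n → ℝ}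

lemma IsEquilibrium.vecMul_cos (h : IsEquilibrium A θ) (y : Fin n) :
    ((cos ∘ θ) ᵥ* A) y = (∑ x, A x y * cos (θ x - θ y)) * cos (θ y) := by
  have hsplit : ∀ x, cos (θ x) * A x y
      = A x y * cos (θ x - θ y) * cos (θ y) - A x y * sin (θ x - θ y) * sin (θ y) := by
    intro x
    rw [← sub_add_cancel (θ x) (θ y), cos_add, add_sub_cancel_right]
    ring
  simp only [Matrix.vecMul, dotProduct, Function.comp_apply, hsplit, Finset.sum_sub_distrib,
    ← Finset.sum_mul, h y, zero_mul, sub_zero]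

lemma IsEquilibrium.vecMul_sin (h : IsEquilibrium A θ) (y : Fin n) :
    ((sin ∘ θ) ᵥ* A) y = (∑ x, A x y * cos (θ x - θ y)) * sin (θ y) := by
  have hsplit : ∀ x, sin (θ x) * A x y
      = A x y * sin (θ x - θ y) * cos (θ y) + A x y * cos (θ x - θ y) * sin (θ y) := by
    intro x
    rw [← sub_add_cancel (θ x) (θ y), sin_add, add_sub_cancel_right]
    ring
  simp only [Matrix.vecMul, dotProduct, Function.comp_apply, hsplit, Finset.sum_add_distrib,
    ← Finset.sum_mul, h y, zero_mul, zero_add]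

lemma IsStable.sum_mul_cos_sub_nonneg (hsymm : A.IsSymm) (hdiag : ∀ x, A x x = 0)
    (h : IsStable A θ) (y : Fin n) : 0 ≤ ∑ x, A x y * cos (θ x - θ y) := by
  have hquad := h.2 (Pi.single y 1)
  rw [sum_sum_mul_sub_single_sq (fun x z => A x z * cos (θ x - θ z)) y] at hquad
  have hswap : ∑ z, A y z * cos (θ y - θ z) = ∑ x, A x y * cos (θ x - θ y) :=
    Finset.sum_congr rfl fun z _ => by rw [hsymm.apply z y, ← cos_neg, neg_sub]
  simp only [hswap, hdiag, zero_mul, mul_zero, sub_zero] at hquad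
  linarith

end Kuramoto

theorem stable_state_s_bound_general {n : ℕ} (A : Matrix (Fin n) (Fin n) ℝ)
    (hA : IsAdjMatrix A) (d α : ℝ) (hd : 0 < d)
    (hexp : IsExpander A d α) (θ : Fin n → ℝ) (hθ : IsStable A θ)
    (hrange : ∀ x, θ x ∈ Set.Ioc (-Real.pi) Real.pi)
    (him : (daido 1 θ).im = 0) (hre : 0 ≤ (daido 1 θ).re) :
    (n : ℝ) * α ^ 2 ≥ (daido 1 θ).re ^ 2 * ∑ x, sFun (θ x) := by
  set ρ := (daido 1 θ).re
  set B := A - (d / n) • onesMat n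
  have hsymm : B.IsSymm := hA.1.sub ((onesMat_isSymm n).smul _)
  have hcos : ∑ x, cos (θ x) = n * ρ := by simpa using sum_cos_eq_natCast_mul_daido_re 1 θ
  have hsin : ∑ x, sin (θ x) = 0 := by simpa [him] using sum_sin_eq_natCast_mul_daido_im 1 θ
  have hlocal : ∀ y, (d * ρ) ^ 2 * sFun (θ y)
      ≤ ((cos ∘ θ) ᵥ* B) y ^ 2 + ((sin ∘ θ) ᵥ* B) y ^ 2 := by
    intro y
    have hn : (n : ℝ) ≠ 0 := by exact_mod_cast y.pos.ne'
    simp only [B, vecMul_sub_smul_onesMat_apply, hθ.1.vecMul_cos, hθ.1.vecMul_sin,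
      Function.comp_apply, hcos, hsin, mul_zero, sub_zero]
    rw [show d / n * (n * ρ) = d * ρ by field_simp]
    exact sq_mul_sFun_le (abs_le.2 ⟨(hrange y).1.le, (hrange y).2⟩) (mul_nonneg hd.le hre)
      (hθ.sum_mul_cos_sub_nonneg hA.1 hA.2.2 y)
  have htotal : (d * ρ) ^ 2 * ∑ x, sFun (θ x) ≤ (α * d) ^ 2 * n := by
    rw [Finset.mul_sum]
    exact (Finset.sum_le_sum fun y _ => hlocal y).trans (sum_sq_vecMul_cos_add_sin_le hsymm hexp θ)
  refine le_of_mul_le_mul_left ?_ (pow_pos hd 2)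
  linear_combination htotal

theorem stable_state_s_bound {n : ℕ} (A : Matrix (Fin n) (Fin n) ℝ)
    (hA : IsAdjMatrix A) (d α : ℝ) (hd : 0 < d) (hα : 0 < α)
    (hexp : IsExpander A d α) (θ : Fin n → ℝ) (hθ : IsStable A θ)
    (hrange : ∀ x, θ x ∈ Set.Ioc (-Real.pi) Real.pi)
    (him : (daido 1 θ).im = 0) (hre : 0 ≤ (daido 1 θ).re) :
    (n : ℝ) * α ^ 2 ≥ (daido 1 θ).re ^ 2 * ∑ x, sFun (θ x) :=
  stable_state_s_bound_general A hA d α hd hexp θ hθ hrange him hre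
end

section
/- Amplification step I: let θ be a stable state of the homogeneous Kuramoto model on an (n,d,α,c⁻,c⁺)-expander graph G with c⁻ < c⁺, taking values in (−π, π], with ρ₁(θ) real and non-negative. Let 0 < ε < 1 + c⁻ and ρ > 0. If the angles 0 < γ < β ≤ π/2 satisfy sin(β − γ) ≥ 2(1 + ρ)α/(1 + c⁻ − ε), then |C_γ(θ)| ≥ min{ (1 + ε/(c⁺ − c⁻))·|C_β(θ)| , ραn , n/2 }. -/
open Finset

/-!
Fix `y ∈ C_β`. Stability makes `∑ₓ A x y · sin (|θ x| - min |θ y| (π/2))` nonnegative: for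
`|θ y| ≤ π/2` it dominates a multiple of the vanishing force at `y`, and otherwise, by
equilibrium, it equals `-cos (θ y) · ∑ₓ A x y cos (θ x - θ y)`, which the Hessian tested at the
indicator of `y` makes nonnegative. Neighbours outside `C_γ` contribute at most `-sin (β - γ)` and
those in `C_γ \ C_β` at most `0`, so `sin (β - γ) · e(C_γᶜ, C_β) ≤ e(C_β, C_β)`.

If `C_γ` were smaller than all three bounds, the expander mixing lemma would make `e(C_β, C_β)` at
most about `(ρ + 1) α d |C_β|`, while the sandwich `c⁻ d ≤ Δ_L ≤ c⁺ d` would make `e(C_γᶜ, C_β)` at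
least about `(1 + c⁻ - (α + ε) / 2) d |C_β|`; the cross term between `C_γ \ C_β` and `C_β` is
controlled by both `α` and `c⁺ - c⁻`, hence by the geometric mean. This contradicts the assumed
lower bound on `sin (β - γ)`.
-/

open Real

section

variable {n : ℕ}

def indVec (X : Finset (Fin n)) : Fin n → ℝ := fun x => if x ∈ X then 1 else 0

section EdgeCounts

open Matrix

variable (M N : Matrix (Fin n) (Fin n) ℝ) (X Y : Finset (Fin n))

lemma eXY_eq_dotProduct : eXY M X Y = indVec X ⬝ᵥ M *ᵥ indVec Y := by
  simp [eXY, indVec, dotProduct, mulVec, Finset.sum_ite_mem, ite_mul]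

lemma eXY_add : eXY (M + N) X Y = eXY M X Y + eXY N X Y := by
  simp [eXY, Finset.sum_add_distrib]

lemma eXY_sub : eXY (M - N) X Y = eXY M X Y - eXY N X Y := by
  simp [eXY, Finset.sum_sub_distrib]

lemma eXY_smul (c : ℝ) : eXY (c • M) X Y = c * eXY M X Y := by
  simp [eXY, Finset.mul_sum]

lemma eXY_one : eXY 1 X Y = #(X ∩ Y) := by
  simp [eXY, Matrix.one_apply]

lemma eXY_onesMat : eXY (onesMat n) X Y = #X * #Y := by
  simp [eXY, onesMat]

lemma eXY_diagonal (f : Fin n → ℝ) : eXY (diagonal f) X Y = ∑ x ∈ X ∩ Y, f x := by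
  simp [eXY, Matrix.diagonal_apply, Finset.sum_ite_mem]

end EdgeCounts

section Spectral

open Matrix

variable {M : Matrix (Fin n) (Fin n) ℝ} (X Y : Finset (Fin n))

lemma Matrix.PosSemidef.eXY_self_nonneg (hM : M.PosSemidef) : 0 ≤ eXY M X X := by
  simpa [eXY_eq_dotProduct] using hM.dotProduct_mulVec_nonneg (indVec X)

lemma Matrix.PosSemidef.eXY_sq_le (hM : M.PosSemidef) :
    eXY M X Y ^ 2 ≤ eXY M X X * eXY M Y Y := by
  have hsymm : eXY M Y X = eXY M X Y := by
    simp only [eXY_eq_dotProduct, dotProduct_mulVec, ← mulVec_transpose,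
      dotProduct_comm (indVec Y), show Mᵀ = M from hM.1]
  have hcs := LinearMap.BilinForm.apply_mul_apply_le_of_forall_zero_le (toLinearMap₂' ℝ M)
    (fun v => by simpa [toLinearMap₂'_apply'] using hM.dotProduct_mulVec_nonneg v)
    (indVec X) (indVec Y)
  simp only [toLinearMap₂'_apply', ← eXY_eq_dotProduct, hsymm] at hcs
  rwa [sq]

lemma le_eXY_self_of_posSemidef_sub {c : ℝ} (h : (M - c • 1).PosSemidef) :
    c * #X ≤ eXY M X X := by
  have := h.eXY_self_nonneg X
  rw [eXY_sub, eXY_smul, eXY_one, Finset.inter_self] at this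
  linarith

lemma eXY_self_le_of_posSemidef_sub {c : ℝ} (h : (c • 1 - M).PosSemidef) :
    eXY M X X ≤ c * #X := by
  have := h.eXY_self_nonneg X
  rw [eXY_sub, eXY_smul, eXY_one, Finset.inter_self] at this
  linarith

lemma norm_toLp_indVec : ‖WithLp.toLp 2 (indVec X)‖ = √(#X : ℝ) := by
  rw [EuclideanSpace.norm_eq]
  congr 1
  simp [indVec, apply_ite]

lemma abs_eXY_le_opNorm (M : Matrix (Fin n) (Fin n) ℝ) :
    |eXY M X Y| ≤ opNorm M * √(#X : ℝ) * √(#Y : ℝ) := by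
  have hinner : eXY M X Y = inner ℝ (WithLp.toLp 2 (indVec X))
      (LinearMap.toContinuousLinearMap (toEuclideanLin M) (WithLp.toLp 2 (indVec Y))) := by
    simp [eXY_eq_dotProduct, EuclideanSpace.inner_eq_star_dotProduct, dotProduct_comm]
  rw [hinner, ← norm_toLp_indVec, ← norm_toLp_indVec]
  calc _ ≤ _ * _ := abs_real_inner_le_norm _ _
    _ ≤ ‖WithLp.toLp 2 (indVec X)‖ * (opNorm M * ‖WithLp.toLp 2 (indVec Y)‖) := by
        gcongr; exact ContinuousLinearMap.le_opNorm _ _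
    _ = _ := by ring

end Spectral

section Expander

variable {A : Matrix (Fin n) (Fin n) ℝ} {d α cm cp : ℝ} {X Y : Finset (Fin n)}

lemma IsExpander.abs_eXY_sub_le (h : IsExpander A d α) (X Y : Finset (Fin n)) :
    |eXY A X Y - d / n * #X * #Y| ≤ α * d * √(#X : ℝ) * √(#Y : ℝ) := by
  have := abs_eXY_le_opNorm X Y (A - (d / n) • onesMat n)
  rw [eXY_sub, eXY_smul, eXY_onesMat, ← mul_assoc] at this
  exact this.trans (by gcongr; exact h)

lemma eXY_lapCentered (A : Matrix (Fin n) (Fin n) ℝ) (d : ℝ) (X Y : Finset (Fin n)) :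
    eXY (lapCentered A d) X Y =
      ∑ x ∈ X ∩ Y, ∑ y, A x y - eXY A X Y - d * #(X ∩ Y) + d / n * #X * #Y := by
  simp only [lapCentered, eXY_add, eXY_sub, eXY_smul, eXY_diagonal, eXY_one, eXY_onesMat]
  ring

lemma eXY_lapCentered_of_disjoint (h : Disjoint X Y) :
    eXY (lapCentered A d) X Y = d / n * #X * #Y - eXY A X Y := by
  rw [eXY_lapCentered, Finset.disjoint_iff_inter_eq_empty.1 h]
  simp only [Finset.sum_empty, Finset.card_empty, Nat.cast_zero]
  ring

lemma eXY_lapCentered_of_subset (hA : A.IsSymm) (h : Y ⊆ X) :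
    eXY (lapCentered A d) X Y = eXY A Xᶜ Y - d * #Y + d / n * #X * #Y := by
  have hdeg : ∑ y ∈ Y, ∑ x, A y x = eXY A X Y + eXY A Xᶜ Y := by
    calc ∑ y ∈ Y, ∑ x, A y x = ∑ y ∈ Y, ∑ x, A x y := by simp only [hA.apply]
      _ = ∑ x, ∑ y ∈ Y, A x y := Finset.sum_comm
      _ = _ := (Finset.sum_add_sum_compl X _).symm
  rw [eXY_lapCentered, Finset.inter_eq_right.2 h, hdeg]
  ring

lemma IsExpander.sq_eXY_lapCentered_le_of_disjoint (h : IsExpander A d α) (hXY : Disjoint X Y) :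
    eXY (lapCentered A d) X Y ^ 2 ≤ (α * d) ^ 2 * #X * #Y := by
  have hmix := pow_le_pow_left₀ (abs_nonneg _) (h.abs_eXY_sub_le X Y) 2
  rw [sq_abs, mul_pow, mul_pow, Real.sq_sqrt (Nat.cast_nonneg _),
    Real.sq_sqrt (Nat.cast_nonneg _)] at hmix
  rwa [eXY_lapCentered_of_disjoint hXY, ← neg_sub, neg_sq]

variable (h : IsExpander5 A d α cm cp)
include h

lemma IsExpander5.le_eXY_lapCentered_self (X : Finset (Fin n)) :
    cm * d * #X ≤ eXY (lapCentered A d) X X :=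
  le_eXY_self_of_posSemidef_sub X h.2.1

lemma IsExpander5.sq_eXY_lapCentered_le_of_disjoint (hXY : Disjoint X Y) :
    eXY (lapCentered A d) X Y ^ 2 ≤ ((cp - cm) * d) ^ 2 * #X * #Y := by
  set M := lapCentered A d - (cm * d) • 1
  have hM : ∀ Z, eXY M Z Z ≤ (cp - cm) * d * #Z := fun Z => by
    have := eXY_self_le_of_posSemidef_sub Z h.2.2
    rw [eXY_sub, eXY_smul, eXY_one, Finset.inter_self]
    linarith
  have hXY' : eXY M X Y = eXY (lapCentered A d) X Y := by
    rw [eXY_sub, eXY_smul, eXY_one, Finset.disjoint_iff_inter_eq_empty.1 hXY]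
    simp
  rw [← hXY']
  calc eXY M X Y ^ 2 ≤ eXY M X X * eXY M Y Y := h.2.1.eXY_sq_le X Y
    _ ≤ ((cp - cm) * d * #X) * ((cp - cm) * d * #Y) :=
        mul_le_mul (hM X) (hM Y) (h.2.1.eXY_self_nonneg Y) (h.2.1.eXY_self_nonneg X |>.trans (hM X))
    _ = _ := by ring

variable {ε : ℝ} (hd : 0 ≤ d) (hα : 0 ≤ α) (hε : 0 ≤ ε)
include hd hα hε

lemma IsExpander5.abs_eXY_lapCentered_le_of_disjoint (hcm : cm ≤ cp) (hXY : Disjoint X Y)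
    (hsize : (cp - cm) * #X ≤ ε * #Y) :
    |eXY (lapCentered A d) X Y| ≤ (α + ε) / 2 * d * #Y := by
  set q := eXY (lapCentered A d) X Y
  have hα' := h.1.sq_eXY_lapCentered_le_of_disjoint hXY
  have hδ' := h.sq_eXY_lapCentered_le_of_disjoint hXY
  have hK : (0 : ℝ) ≤ d ^ 2 * (#X * #Y) := by positivity
  have hgm : q ^ 2 ≤ α * (cp - cm) * d ^ 2 * (#X * #Y) := by
    rcases le_total α (cp - cm) with hle | hle
    · nlinarith [mul_le_mul_of_nonneg_right (mul_le_mul_of_nonneg_left hle hα) hK]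
    · nlinarith [mul_le_mul_of_nonneg_right (mul_le_mul_of_nonneg_left hle (sub_nonneg.2 hcm)) hK]
  refine abs_le_of_sq_le_sq ?_ (by positivity)
  have hY : (0 : ℝ) ≤ #Y := Nat.cast_nonneg _
  nlinarith [mul_le_mul_of_nonneg_right hsize (mul_nonneg (mul_nonneg hα (sq_nonneg d)) hY),
    mul_nonneg (sq_nonneg (α - ε)) (mul_nonneg (sq_nonneg d) (sq_nonneg (#Y : ℝ)))]

lemma IsExpander5.le_eXY_compl (hA : A.IsSymm) (hcm : cm ≤ cp) {B Γ : Finset (Fin n)}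
    (hBΓ : B ⊆ Γ) (hsize : (cp - cm) * (#Γ - #B) ≤ ε * #B) :
    (1 + cm - (α + ε) / 2) * d * #B - d / n * #Γ * #B ≤ eXY A Γᶜ B := by
  have hsplit : eXY (lapCentered A d) (Γ \ B) B + eXY (lapCentered A d) B B =
      eXY (lapCentered A d) Γ B := Finset.sum_sdiff hBΓ
  rw [eXY_lapCentered_of_subset hA hBΓ] at hsplit
  have hcross := h.abs_eXY_lapCentered_le_of_disjoint hd hα hε hcm Finset.sdiff_disjoint
    (by rwa [Finset.card_sdiff_of_subset hBΓ, Nat.cast_sub (Finset.card_le_card hBΓ)])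
  have hdiag := h.le_eXY_lapCentered_self B
  linarith [(abs_le.1 hcross).1]

end Expander

lemma sin_sub_le_sin_abs_sub {a b : ℝ} (ha : |a| ≤ π) (hb0 : 0 ≤ b) (hb : b ≤ π / 2) :
    sin (a - b) ≤ sin (|a| - b) := by
  rcases le_or_gt 0 a with h | h
  · rw [abs_of_nonneg h]
  · rw [abs_of_neg h, sin_sub, sin_sub, sin_neg, cos_neg]
    have hsa : sin a ≤ 0 := sin_nonpos_of_nonpos_of_neg_pi_le h.le (neg_le_of_abs_le ha)
    have hcb : 0 ≤ cos b := cos_nonneg_of_mem_Icc ⟨by linarith [pi_pos], hb⟩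
    nlinarith

lemma exists_mul_sin_sub_le_sin_abs_sub_abs {b : ℝ} (hb : |b| ≤ π / 2) :
    ∃ σ : ℝ, ∀ a, |a| ≤ π → σ * sin (a - b) ≤ sin (|a| - |b|) := by
  rcases le_or_gt 0 b with h | h
  · refine ⟨1, fun a ha => ?_⟩
    rw [one_mul, abs_of_nonneg h]
    exact sin_sub_le_sin_abs_sub ha h (by rwa [abs_of_nonneg h] at hb)
  · refine ⟨-1, fun a ha => ?_⟩
    have := sin_sub_le_sin_abs_sub (a := -a) (b := -b) (by rwa [abs_neg]) (by linarith)
      (by rwa [abs_of_neg h] at hb)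
    rw [abs_neg] at this
    rw [abs_of_neg h, neg_one_mul, ← sin_neg, neg_sub]
    convert this using 2
    ring

lemma kerK_le_sin_sub {a b t β : ℝ} (ha : |a| ≤ t) (ht : 0 ≤ t) (htβ : t ≤ β) (hβ : β ≤ π / 2)
    (hb : β ≤ |b|) : kerK a b ≤ sin (t - β) := by
  have hμ : β ≤ min |b| (π / 2) := le_min hb hβ
  have hμ' : min |b| (π / 2) ≤ π / 2 := min_le_right _ _
  exact sin_le_sin_of_le_of_le_pi_div_two (by linarith [abs_nonneg a]) (by linarith)
    (by linarith)

lemma Cset_anti (θ : Fin n → ℝ) {γ β : ℝ} (h : γ ≤ β) : Cset θ β ⊆ Cset θ γ := fun x hx => by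
  simp only [Cset, Finset.mem_filter, Finset.mem_univ, true_and] at hx ⊢
  linarith

section Kuramoto

variable {A : Matrix (Fin n) (Fin n) ℝ} {θ : Fin n → ℝ}

lemma IsAdjMatrix.nonneg (hA : IsAdjMatrix A) (x y : Fin n) : 0 ≤ A x y := by
  rcases hA.2.1 x y with h | h <;> simp [h]

lemma IsStable.sum_mul_cos_nonneg (hA : IsAdjMatrix A) (hθ : IsStable A θ) (y : Fin n) :
    0 ≤ ∑ x, A x y * cos (θ x - θ y) := by
  have hsq : ∀ x z, (indVec {y} x - indVec {y} z) ^ 2 = (if x = y then 1 else 0)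
      + (if z = y then 1 else 0) - 2 * (if x = y ∧ z = y then 1 else 0) := by
    intro x z
    by_cases hx : x = y <;> by_cases hz : z = y <;> norm_num [indVec, hx, hz]
  have h := hθ.2 (indVec {y})
  simp only [hsq, mul_add, mul_sub, mul_ite, mul_one, mul_zero, Finset.sum_add_distrib,
    Finset.sum_sub_distrib, Finset.sum_ite_eq', Finset.mem_univ, if_true, ite_and,
    Finset.sum_ite_irrel, Finset.sum_const_zero] at h
  have hsymm : ∑ x, A y x * cos (θ y - θ x) = ∑ x, A x y * cos (θ x - θ y) :=
    Finset.sum_congr rfl fun x _ => by rw [hA.1.apply x y, ← neg_sub, cos_neg]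
  rw [hsymm, hA.2.2 y] at h
  linarith

lemma IsStable.sum_mul_kerK_nonneg (hA : IsAdjMatrix A) (hθ : IsStable A θ)
    (hθπ : ∀ x, |θ x| ≤ π) (y : Fin n) : 0 ≤ ∑ x, A x y * kerK (θ x) (θ y) := by
  rcases le_or_gt |θ y| (π / 2) with hy | hy
  · obtain ⟨σ, hσ⟩ := exists_mul_sin_sub_le_sin_abs_sub_abs hy
    calc (0 : ℝ) = σ * ∑ x, A x y * sin (θ x - θ y) := by rw [hθ.1 y, mul_zero]
      _ = ∑ x, A x y * (σ * sin (θ x - θ y)) := by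
          rw [Finset.mul_sum]; exact Finset.sum_congr rfl fun x _ => by ring
      _ ≤ ∑ x, A x y * kerK (θ x) (θ y) := Finset.sum_le_sum fun x _ => by
          rw [kerK, min_eq_left hy]
          exact mul_le_mul_of_nonneg_left (hσ _ (hθπ x)) (hA.nonneg x y)
  · have hker : ∀ x, kerK (θ x) (θ y) =
        sin (θ y) * sin (θ x - θ y) - cos (θ y) * cos (θ x - θ y) := fun x => by
      rw [kerK, min_eq_right hy.le, sin_sub_pi_div_two, cos_abs]
      conv_lhs => rw [← sub_add_cancel (θ x) (θ y), cos_add]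
      ring
    have hcy : cos (θ y) ≤ 0 := by
      rw [← cos_abs]
      exact cos_nonpos_of_pi_div_two_le_of_le hy.le (by linarith [hθπ y, pi_pos])
    simp only [hker, mul_sub, Finset.sum_sub_distrib, mul_left_comm (A _ y), ← Finset.mul_sum,
      hθ.1 y, mul_zero, zero_sub]
    nlinarith [hθ.sum_mul_cos_nonneg hA y]

lemma IsStable.sin_mul_eXY_compl_Cset_le (hA : IsAdjMatrix A) (hθ : IsStable A θ)
    (hθπ : ∀ x, |θ x| ≤ π) {γ β : ℝ} (hγ : 0 ≤ γ) (hγβ : γ ≤ β) (hβ : β ≤ π / 2) :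
    sin (β - γ) * eXY A (Cset θ γ)ᶜ (Cset θ β) ≤ eXY A (Cset θ β) (Cset θ β) := by
  set Γ := Cset θ γ
  set B := Cset θ β
  have hvertex : ∀ y ∈ B, sin (β - γ) * ∑ x ∈ Γᶜ, A x y ≤ ∑ x ∈ B, A x y := fun y hy => by
    have hy : β ≤ |θ y| := (Finset.mem_filter.1 hy).2
    have hsplit := hθ.sum_mul_kerK_nonneg hA hθπ y
    rw [← Finset.sum_add_sum_compl Γ, ← Finset.sum_sdiff (Cset_anti θ hγβ)] at hsplit
    have hB : ∑ x ∈ B, A x y * kerK (θ x) (θ y) ≤ ∑ x ∈ B, A x y :=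
      Finset.sum_le_sum fun x _ => mul_le_of_le_one_right (hA.nonneg x y) (sin_le_one _)
    have hΓB : ∑ x ∈ Γ \ B, A x y * kerK (θ x) (θ y) ≤ 0 :=
      Finset.sum_nonpos fun x hx => mul_nonpos_of_nonneg_of_nonpos (hA.nonneg x y) <| by
        have hx : |θ x| < β := by simpa [B, Cset] using (Finset.mem_sdiff.1 hx).2
        simpa using kerK_le_sin_sub hx.le (hγ.trans hγβ) le_rfl hβ hy
    have hΓc : ∑ x ∈ Γᶜ, A x y * kerK (θ x) (θ y) ≤ -(sin (β - γ) * ∑ x ∈ Γᶜ, A x y) := by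
      rw [Finset.mul_sum, ← Finset.sum_neg_distrib]
      refine Finset.sum_le_sum fun x hx => ?_
      have hx : |θ x| < γ := by simpa [Γ, Cset] using hx
      have hker := kerK_le_sin_sub hx.le hγ hγβ hβ hy
      rw [← neg_sub, sin_neg] at hker
      nlinarith [hA.nonneg x y]
    linarith
  simpa only [eXY, Finset.mul_sum, Finset.sum_comm (s := B)] using Finset.sum_le_sum hvertex

lemma IsStable.sin_mul_le_of_isExpander5 (hA : IsAdjMatrix A) (hθ : IsStable A θ)
    (hθπ : ∀ x, |θ x| ≤ π) {d α cm cp ε γ β : ℝ} (hexp : IsExpander5 A d α cm cp) (hd : 0 < d)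
    (hα : 0 ≤ α) (hε : 0 ≤ ε) (hcm : cm ≤ cp) (hγ : 0 ≤ γ) (hγβ : γ ≤ β) (hβ : β ≤ π / 2)
    (hB : (0 : ℝ) < #(Cset θ β))
    (hsize : (cp - cm) * (#(Cset θ γ) - #(Cset θ β)) ≤ ε * #(Cset θ β)) :
    sin (β - γ) * (1 + cm - (α + ε) / 2 - #(Cset θ γ) / n) ≤ #(Cset θ β) / n + α := by
  have hout := hexp.le_eXY_compl hd.le hα hε hA.1 hcm (Cset_anti θ hγβ) hsize
  have hkey := hθ.sin_mul_eXY_compl_Cset_le hA hθπ hγ hγβ hβ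
  have hin := (abs_le.1 (hexp.1.abs_eXY_sub_le (Cset θ β) (Cset θ β))).2
  rw [mul_assoc (α * d), Real.mul_self_sqrt (Nat.cast_nonneg _)] at hin
  have hs : 0 ≤ sin (β - γ) := sin_nonneg_of_nonneg_of_le_pi (by linarith) (by linarith [pi_pos])
  refine le_of_mul_le_mul_right ?_ (mul_pos hd hB)
  calc _ = sin (β - γ) * ((1 + cm - (α + ε) / 2) * d * #(Cset θ β)
        - d / n * #(Cset θ γ) * #(Cset θ β)) := by ring
    _ ≤ sin (β - γ) * eXY A (Cset θ γ)ᶜ (Cset θ β) := mul_le_mul_of_nonneg_left hout hs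
    _ ≤ eXY A (Cset θ β) (Cset θ β) := hkey
    _ ≤ d / n * #(Cset θ β) * #(Cset θ β) + α * d * #(Cset θ β) := by linarith
    _ = _ := by ring

end Kuramoto

end
theorem amplification_step_I_general {n : ℕ} (A : Matrix (Fin n) (Fin n) ℝ)
    (hA : IsAdjMatrix A) (d α cm cp : ℝ) (hd : 0 < d) (hα : 0 < α)
    (hlt : cm < cp) (hexp : IsExpander5 A d α cm cp)
    (θ : Fin n → ℝ) (hθ : IsStable A θ)
    (hrange : ∀ x, θ x ∈ Set.Ioc (-Real.pi) Real.pi)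
    (ε ρ : ℝ) (hε0 : 0 < ε) (hε1 : ε < 1 + cm)
    (γ β : ℝ) (hγ : 0 < γ) (hγβ : γ < β) (hβ : β ≤ Real.pi / 2)
    (hsin : Real.sin (β - γ) ≥ 2 * (1 + ρ) * α / (1 + cm - ε)) :
    ((Cset θ γ).card : ℝ) ≥
      min (min ((1 + ε / (cp - cm)) * (Cset θ β).card) (ρ * α * n)) ((n : ℝ) / 2) := by
  by_contra hcon
  simp only [ge_iff_le, not_le, lt_min_iff] at hcon
  obtain ⟨⟨hgrowth, hsmall⟩, -⟩ := hcon
  have hδ : 0 < cp - cm := sub_pos.2 hlt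
  have hb : (0 : ℝ) < #(Cset θ β) :=
    pos_of_mul_pos_right ((Nat.cast_nonneg _).trans_lt hgrowth) (by positivity)
  have hn : (0 : ℝ) < n := hb.trans_le (by simpa using Finset.card_le_univ (Cset θ β))
  have hsize : (cp - cm) * (#(Cset θ γ) - #(Cset θ β)) ≤ ε * #(Cset θ β) := by
    have h := mul_lt_mul_of_pos_left hgrowth hδ
    field_simp at h
    linarith
  have hamp := hθ.sin_mul_le_of_isExpander5 hA (fun x => abs_le.2 ⟨(hrange x).1.le, (hrange x).2⟩)
    hexp hd hα.le hε0.le hlt.le hγ.le hγβ.le hβ hb hsize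
  have hdens : (#(Cset θ β) : ℝ) / n ≤ #(Cset θ γ) / n := by
    gcongr; exact Cset_anti θ hγβ.le
  have hsmall' : (#(Cset θ γ) : ℝ) / n < ρ * α := (div_lt_iff₀ hn).2 hsmall
  have hs : 0 < sin (β - γ) := sin_pos_of_pos_of_lt_pi (by linarith) (by linarith [pi_pos])
  have hs1 : 0 ≤ 1 - sin (β - γ) := sub_nonneg.2 (sin_le_one _)
  have hsin' : 2 * (1 + ρ) * α ≤ sin (β - γ) * (1 + cm - ε) := (div_le_iff₀ (by linarith)).1 hsin
  linarith [mul_pos hs hε0, mul_nonneg hs1 hα.le,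
    mul_nonneg hs1 (by positivity : (0 : ℝ) ≤ #(Cset θ γ) / n)]

theorem amplification_step_I {n : ℕ} (A : Matrix (Fin n) (Fin n) ℝ)
    (hA : IsAdjMatrix A) (d α cm cp : ℝ) (hd : 0 < d) (hα : 0 < α)
    (hlt : cm < cp) (hexp : IsExpander5 A d α cm cp)
    (θ : Fin n → ℝ) (hθ : IsStable A θ)
    (hrange : ∀ x, θ x ∈ Set.Ioc (-Real.pi) Real.pi)
    (him : (daido 1 θ).im = 0) (hre : 0 ≤ (daido 1 θ).re)
    (ε ρ : ℝ) (hε0 : 0 < ε) (hε1 : ε < 1 + cm) (hρ : 0 < ρ)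
    (γ β : ℝ) (hγ : 0 < γ) (hγβ : γ < β) (hβ : β ≤ Real.pi / 2)
    (hsin : Real.sin (β - γ) ≥ 2 * (1 + ρ) * α / (1 + cm - ε)) :
    ((Cset θ γ).card : ℝ) ≥
      min (min ((1 + ε / (cp - cm)) * (Cset θ β).card) (ρ * α * n)) ((n : ℝ) / 2) :=
  amplification_step_I_general A hA d α cm cp hd hα hlt hexp θ hθ hrange ε ρ hε0 hε1 γ β hγ hγβ hβ
    hsin
end
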